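/- Let $N\ge1$ and let $\beta>1$ be the multinacci number, i.e., $\beta^{N+1}=\beta^N+\beta^{N-1}+\dots+1$. Then the quasi-greedy expansion of $1$ in base $\beta$ is $(1^N 0)^\infty$ and $c_\beta=\frac{N}{N+1}$. -/

import Mathlib

open scoped BigOperators
open Filter

/-- The beta-map `τ_β(x) = βx - ⌊βx⌋`. -/
noncomputable def tauβ (β x : ℝ) : ℝ := β * x - ⌊β * x⌋

/-- The greedy digits: `gdigit β x n = ⌊β τ_β^n(x)⌋` (0-indexed; `gdigit β x (n-1) = g_n(x)`). -/
noncomputable def gdigit (β x : ℝ) (n : ℕ) : ℤ := ⌊β * (tauβ β)^[n] x⌋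

/-- `x` is simple if some iterate of the beta-map hits `1/β`. -/
def isSimple (β x : ℝ) : Prop := ∃ n : ℕ, (tauβ β)^[n] x = 1 / β

open Classical in
/-- The quasi-greedy expansion of `1` (0-indexed): if `1` is simple with minimal `m` such that
`τ_β^[m] 1 = 1/β` (so `S(1) = m+1`), it is the periodic repetition of the word
`g_1(1) … g_{S-1}(1) (g_S(1) - 1)`; otherwise it is the greedy expansion of `1`. -/
noncomputable def qone (β : ℝ) : ℕ → ℤ :=
  if h : ∃ m : ℕ, (tauβ β)^[m] (1 : ℝ) = 1 / β then
    fun n =>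
      if n % (Nat.find h + 1) = Nat.find h then gdigit β 1 (Nat.find h) - 1
      else gdigit β 1 (n % (Nat.find h + 1))
  else gdigit β 1

/-- Lexicographic order `a ⪯ b` on sequences. -/
def lexLe (a b : ℕ → ℤ) : Prop :=
  a = b ∨ ∃ m : ℕ, (∀ i, i < m → a i = b i) ∧ a m < b m

/-- The left shift. -/
def shiftSeq (u : ℕ → ℤ) : ℕ → ℤ := fun n => u (n + 1)

/-- The beta-shift: the closure (in the product topology) of the set of greedy digit
sequences of non-simple points of `[0,1]`. -/
def Xbeta (β : ℝ) : Set (ℕ → ℤ) :=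
  closure {u | ∃ x : ℝ, x ∈ Set.Icc (0:ℝ) 1 ∧ ¬ isSimple β x ∧ u = gdigit β x}

/-- `Hfun q t n = exp (t * (q 0 + ⋯ + q (n-1)))`. -/
noncomputable def Hfun (q : ℕ → ℤ) (t : ℝ) (n : ℕ) : ℝ :=
  Real.exp (t * ∑ i ∈ Finset.range n, (q i : ℝ))

/-- The power series `φ_t(z) = ∑_{n ≥ 1} q_n H_{n-1}(t) z^n` (real variable). -/
noncomputable def phiR (q : ℕ → ℤ) (t z : ℝ) : ℝ :=
  ∑' n : ℕ, (q n : ℝ) * Hfun q t n * z ^ (n + 1)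

/-- The power series `φ_t(z)` (complex variable). -/
noncomputable def phiC (q : ℕ → ℤ) (t : ℝ) (z : ℂ) : ℂ :=
  ∑' n : ℕ, ((q n : ℝ) : ℂ) * ((Hfun q t n : ℝ) : ℂ) * z ^ (n + 1)

/-- `r_t = limsup_n ( sup_{x ∈ X_β} e^{t Σ_{i<n} x_i} )^{1/n}`. -/
noncomputable def rT (β t : ℝ) : ℝ :=
  Filter.atTop.limsup fun n : ℕ =>
    (⨆ u : Xbeta β, Real.exp (t * ∑ i ∈ Finset.range n, ((u : ℕ → ℤ) i : ℝ))) ^ ((1:ℝ) / n)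

/-- The lexicographic interval `[0̲, a]` in `X_β`. -/
def Ival (β : ℝ) (a : ℕ → ℤ) : Set (ℕ → ℤ) := {u ∈ Xbeta β | lexLe u a}

/-- Prepend a digit to a sequence. -/
def consSeq (a : ℤ) (u : ℕ → ℤ) : ℕ → ℤ := fun n => if n = 0 then a else u (n - 1)

open Classical in
/-- The transfer operator with potential `t·χ_{C_1}`:
`(𝓛_t f)(x) = Σ_{σ y = x, y ∈ X_β} e^{t χ_{C_1}(y)} f(y)`. -/
noncomputable def Lop (β t : ℝ) (f : (ℕ → ℤ) → ℝ) (u : ℕ → ℤ) : ℝ :=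
  (if consSeq 0 u ∈ Xbeta β then f (consSeq 0 u) else 0)
    + Real.exp t * (if consSeq 1 u ∈ Xbeta β then f (consSeq 1 u) else 0)

open Classical in
/-- The transfer operator (acting on complex-valued functions). -/
noncomputable def LopC (β t : ℝ) (f : (ℕ → ℤ) → ℂ) (u : ℕ → ℤ) : ℂ :=
  (if consSeq 0 u ∈ Xbeta β then f (consSeq 0 u) else 0)
    + Real.exp t * (if consSeq 1 u ∈ Xbeta β then f (consSeq 1 u) else 0)

open MeasureTheory in
/-- `c_β = sup_{μ ∈ M(X_β)} μ(C_1)`, the supremum of the measure of the cylinder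
`C_1 = {x_1 = 1}` over all shift-invariant Borel probability measures on `X_β`. -/
noncomputable def cbeta (β : ℝ) : ℝ :=
  sSup {r : ℝ | ∃ μ : Measure (ℕ → ℤ), IsProbabilityMeasure μ ∧
    μ (Xbeta β) = 1 ∧ μ.map shiftSeq = μ ∧ r = (μ {u | u 0 = 1}).toReal}

section
variable {N : ℕ} {β : ℝ}

noncomputable def qaux (β : ℝ) (m : ℕ) : ℝ := (∑ i ∈ Finset.range m, β ^ i) / β ^ m

lemma sum_shift (β : ℝ) (m : ℕ) :
    ∑ x ∈ Finset.range m, β ^ (x + 1) = β * ∑ x ∈ Finset.range m, β ^ x := by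
  rw [Finset.mul_sum]; apply Finset.sum_congr rfl; intro i _; ring

lemma qaux_zero : qaux β 0 = 0 := by simp [qaux]

lemma qaux_succ (hβ : 1 < β) (m : ℕ) : qaux β (m + 1) = qaux β m + β⁻¹ ^ (m+1) := by
  have hb : (0:ℝ) < β := lt_trans one_pos hβ
  have hbm : (β:ℝ) ^ m ≠ 0 := by positivity
  have hbm1 : (β:ℝ) ^ (m+1) ≠ 0 := by positivity
  rw [qaux, qaux, Finset.sum_range_succ', inv_pow, sum_shift]
  field_simp
  ring

lemma qaux_nonneg (hβ : 1 < β) (m : ℕ) : 0 ≤ qaux β m := by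
  have hb : (0:ℝ) < β := lt_trans one_pos hβ
  apply div_nonneg _ (by positivity)
  apply Finset.sum_nonneg; intro i _; positivity

lemma qaux_strictMono (hβ : 1 < β) : StrictMono (qaux β) := by
  apply strictMono_nat_of_lt_succ
  intro n
  rw [qaux_succ hβ]
  have hb : (0:ℝ) < β := lt_trans one_pos hβ
  have : (0:ℝ) < β⁻¹ ^ (n+1) := by positivity
  linarith

lemma beta_mul_qaux (hβ : 1 < β) (m : ℕ) : β * qaux β (m + 1) = qaux β m + 1 := by
  have hb : (0:ℝ) < β := lt_trans one_pos hβ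
  have hbm : (β:ℝ) ^ m ≠ 0 := by positivity
  rw [qaux, qaux, Finset.sum_range_succ]
  field_simp
  ring

lemma qaux_one (hβ : 1 < β) : qaux β 1 = 1 / β := by
  have hb : (0:ℝ) < β := lt_trans one_pos hβ
  simp [qaux]


variable (heq : β ^ (N + 1) = ∑ i ∈ Finset.range (N + 1), β ^ i)

section
include heq

lemma qaux_top (hβ : 1 < β) : qaux β (N + 1) = 1 := by
  have hb : (0:ℝ) < β := lt_trans one_pos hβ
  rw [qaux, ← heq]
  field_simp

lemma qaux_lt_one (hβ : 1 < β) {m : ℕ} (hm : m ≤ N) : qaux β m < 1 := by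
  rw [← qaux_top heq hβ]
  exact qaux_strictMono hβ (by omega)

/-- τ of qaux (m+1) is qaux m, with digit 1, as long as m ≤ N. -/
lemma tau_qaux (hβ : 1 < β) {m : ℕ} (hm : m ≤ N) :
    tauβ β (qaux β (m + 1)) = qaux β m ∧ ⌊β * qaux β (m + 1)⌋ = 1 := by
  have h1 := beta_mul_qaux hβ m
  have h0 := qaux_nonneg hβ m
  have hlt := qaux_lt_one heq hβ hm
  have hf : ⌊β * qaux β (m + 1)⌋ = 1 := by
    rw [h1, Int.floor_add_one, Int.floor_eq_zero_iff.mpr ⟨h0, hlt⟩]; ring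
  refine ⟨?_, hf⟩
  rw [tauβ, hf, h1]; push_cast; ring

lemma tau_iter_one (hβ : 1 < β) : ∀ k, k ≤ N → (tauβ β)^[k] 1 = qaux β (N + 1 - k) := by
  intro k
  induction k with
  | zero => intro _; simpa using (qaux_top heq hβ).symm
  | succ k ih =>
    intro hk
    have hk' : k ≤ N := by omega
    rw [Function.iterate_succ_apply', ih hk']
    have h2 : N + 1 - k = (N - k) + 1 := by omega
    rw [h2, (tau_qaux heq hβ (by omega : N - k ≤ N)).1]
    congr 1
    omega

lemma tau_iter_one_N (hβ : 1 < β) : (tauβ β)^[N] 1 = 1 / β := by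
  rw [tau_iter_one heq hβ N le_rfl]
  have : N + 1 - N = 1 := by omega
  rw [this, qaux_one hβ]

lemma one_simple (hβ : 1 < β) : ∃ m : ℕ, (tauβ β)^[m] (1:ℝ) = 1 / β :=
  ⟨N, tau_iter_one_N heq hβ⟩

lemma tau_iter_one_ne (hβ : 1 < β) {k : ℕ} (hk : k < N) : (tauβ β)^[k] 1 ≠ 1 / β := by
  rw [tau_iter_one heq hβ k (le_of_lt hk)]
  have h2 : (2:ℕ) ≤ N + 1 - k := by omega
  have := qaux_strictMono hβ (show 1 < N + 1 - k by omega)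
  rw [qaux_one hβ] at this
  exact ne_of_gt this

lemma find_eq_N (hβ : 1 < β) : Nat.find (one_simple heq hβ) = N := by
  rw [Nat.find_eq_iff]
  exact ⟨tau_iter_one_N heq hβ, fun k hk => tau_iter_one_ne heq hβ hk⟩

lemma gdigit_one (hβ : 1 < β) {k : ℕ} (hk : k ≤ N) : gdigit β 1 k = 1 := by
  rw [gdigit, tau_iter_one heq hβ k hk]
  have h2 : N + 1 - k = (N - k) + 1 := by omega
  rw [h2]
  exact (tau_qaux heq hβ (by omega : N - k ≤ N)).2

end
end

section
variable {N : ℕ} {β : ℝ}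

lemma tau_fract (x : ℝ) : tauβ β x = Int.fract (β * x) := rfl

lemma tau_mem_Ico (x : ℝ) : tauβ β x ∈ Set.Ico (0:ℝ) 1 := by
  rw [tau_fract]; exact ⟨Int.fract_nonneg _, Int.fract_lt_one _⟩

lemma tau_iter_mem (x : ℝ) (k : ℕ) (hk : 1 ≤ k) : (tauβ β)^[k] x ∈ Set.Ico (0:ℝ) 1 := by
  obtain ⟨j, rfl⟩ : ∃ j, k = j + 1 := ⟨k - 1, by omega⟩
  rw [Function.iterate_succ_apply']
  exact tau_mem_Ico _

lemma beta_tau_eq (x : ℝ) (k : ℕ) :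
    β * (tauβ β)^[k] x = gdigit β x k + (tauβ β)^[k+1] x := by
  rw [Function.iterate_succ_apply', gdigit, tauβ]
  ring

lemma beta_lt_two (hβ : 1 < β) (heq : β ^ (N + 1) = ∑ i ∈ Finset.range (N + 1), β ^ i) :
    β < 2 := by
  have hb : (0:ℝ) < β ^ (N+1) := by positivity
  have h := geom_sum_mul β (N+1)
  rw [← heq] at h
  nlinarith

/-- a point of [0,1] whose first N+1 digits are all 1 is ≥ 1 + positive -/
lemma no_ones_block (hβ : 1 < β) (heq : β ^ (N + 1) = ∑ i ∈ Finset.range (N + 1), β ^ i)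
    {x : ℝ} (hx : x ∈ Set.Icc (0:ℝ) 1) (hns : ¬ isSimple β x) :
    ¬ ∀ j, j ≤ N → gdigit β x j = 1 := by
  intro hall
  have hx1 : x < 1 := by
    rcases lt_or_eq_of_le hx.2 with h | h
    · exact h
    · exfalso; exact hns ⟨N, by rw [h]; exact tau_iter_one_N heq hβ⟩
  have key : ∀ k, k ≤ N + 1 → β ^ k * x = (∑ i ∈ Finset.range k, β ^ i) + (tauβ β)^[k] x := by
    intro k
    induction k with
    | zero => intro _; simp
    | succ k ih =>
      intro hk
      have hd : gdigit β x k = 1 := hall k (by omega)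
      have h1 : β * (β ^ k * x) = β * ((∑ i ∈ Finset.range k, β ^ i) + (tauβ β)^[k] x) := by
        rw [ih (by omega)]
      have h2 := beta_tau_eq (β := β) x k
      rw [hd] at h2
      push_cast at h2
      rw [Finset.sum_range_succ', sum_shift]
      have : β ^ (k+1) * x = β * (β ^ k * x) := by ring
      rw [this, h1, mul_add, h2]
      push_cast
      ring
  have h := key (N+1) le_rfl
  have hge : (0:ℝ) ≤ (tauβ β)^[N+1] x := (tau_iter_mem x (N+1) (by omega)).1
  rw [← heq] at h
  have hb : (0:ℝ) < β ^ (N+1) := by positivity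
  nlinarith

end


section
open MeasureTheory
open scoped ENNReal NNReal
variable {N : ℕ} {β : ℝ}

lemma Xbeta_isClosed : IsClosed (Xbeta β) := isClosed_closure

lemma Xbeta_no_block (hβ : 1 < β) (heq : β ^ (N + 1) = ∑ i ∈ Finset.range (N + 1), β ^ i)
    {u : ℕ → ℤ} (hu : u ∈ Xbeta β) : ¬ ∀ j, j ≤ N → u j = 1 := by
  have hG : IsOpen (⋂ j ∈ Finset.range (N+1), {u : ℕ → ℤ | u j = 1}) := by
    apply isOpen_biInter_finset
    intro j _
    have h1 : {u : ℕ → ℤ | u j = 1} = (fun u : ℕ → ℤ => u j) ⁻¹' {1} := rfl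
    rw [h1]
    exact (continuous_apply j).isOpen_preimage _ (isOpen_discrete _)
  have hF : IsClosed {u : ℕ → ℤ | ¬ ∀ j, j ≤ N → u j = 1} := by
    have : {u : ℕ → ℤ | ¬ ∀ j, j ≤ N → u j = 1}
        = (⋂ j ∈ Finset.range (N+1), {u : ℕ → ℤ | u j = 1})ᶜ := by
      ext v
      simp only [Set.mem_setOf_eq, Set.mem_compl_iff, Set.mem_iInter, Finset.mem_range]
      constructor
      · intro h h'; exact h (fun j hj => h' j (by omega))
      · intro h h'; exact h (fun j hj => h' j (by omega))
    rw [this]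
    exact hG.isClosed_compl
  have hsub : Xbeta β ⊆ {u : ℕ → ℤ | ¬ ∀ j, j ≤ N → u j = 1} := by
    apply closure_minimal _ hF
    rintro u ⟨x, hx, hns, rfl⟩
    exact no_ones_block hβ heq hx hns
  exact hsub hu

lemma measurable_cyl (j : ℕ) : MeasurableSet {u : ℕ → ℤ | u j = 1} :=
  measurable_pi_apply j (measurableSet_singleton 1)

lemma measurable_shiftSeq : Measurable shiftSeq :=
  measurable_pi_lambda _ (fun n => measurable_pi_apply (n+1))

lemma meas_coord {μ : Measure (ℕ → ℤ)} (hinv : μ.map shiftSeq = μ) (j : ℕ) :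
    μ {u | u j = 1} = μ {u | u 0 = 1} := by
  induction j with
  | zero => rfl
  | succ j ih =>
    have h1 : {u : ℕ → ℤ | u (j+1) = 1} = shiftSeq ⁻¹' {u | u j = 1} := rfl
    rw [h1, ← Measure.map_apply measurable_shiftSeq (measurable_cyl j), hinv, ih]

lemma cbeta_upper (hβ : 1 < β) (heq : β ^ (N + 1) = ∑ i ∈ Finset.range (N + 1), β ^ i)
    {μ : Measure (ℕ → ℤ)} (hprob : IsProbabilityMeasure μ) (hX : μ (Xbeta β) = 1)
    (hinv : μ.map shiftSeq = μ) :
    (μ {u | u 0 = 1}).toReal ≤ (N : ℝ) / (N + 1) := by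
  set c := μ {u | u 0 = 1} with hc
  have hXm : MeasurableSet (Xbeta β) := Xbeta_isClosed.measurableSet
  have hXc : μ (Xbeta β)ᶜ = 0 := by
    rw [prob_compl_eq_one_sub hXm, hX, tsub_self]
  set D : ℕ → Set (ℕ → ℤ) := fun j => Xbeta β ∩ {u | u j = 1} with hD
  have hDm : ∀ j, MeasurableSet (D j) := fun j => hXm.inter (measurable_cyl j)
  have hDj : ∀ j, μ (D j) = c := by
    intro j
    apply le_antisymm
    · calc μ (D j) ≤ μ {u | u j = 1} := measure_mono Set.inter_subset_right
        _ = c := meas_coord hinv j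
    · have hsub : {u : ℕ → ℤ | u j = 1} ⊆ D j ∪ (Xbeta β)ᶜ := by
        intro u hu
        by_cases h : u ∈ Xbeta β
        · exact Or.inl ⟨h, hu⟩
        · exact Or.inr h
      calc c = μ {u | u j = 1} := (meas_coord hinv j).symm
        _ ≤ μ (D j ∪ (Xbeta β)ᶜ) := measure_mono hsub
        _ ≤ μ (D j) + μ (Xbeta β)ᶜ := measure_union_le _ _
        _ = μ (D j) := by rw [hXc, add_zero]
  have hcover : (Set.univ : Set (ℕ → ℤ)) = ⋃ j ∈ Finset.range (N+1), (D j)ᶜ := by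
    ext u
    simp only [Set.mem_univ, true_iff, Set.mem_iUnion, Finset.mem_range, Set.mem_compl_iff]
    by_contra h
    push_neg at h
    have hu0 : u ∈ Xbeta β := (h 0 (by omega)).1
    exact Xbeta_no_block hβ heq hu0 (fun j hj => (h j (by omega)).2
      )
  have hsum : (1 : ℝ≥0∞) ≤ ∑ j ∈ Finset.range (N+1), μ (D j)ᶜ := by
    calc (1 : ℝ≥0∞) = μ Set.univ := (measure_univ).symm
      _ = μ (⋃ j ∈ Finset.range (N+1), (D j)ᶜ) := by rw [← hcover]
      _ ≤ ∑ j ∈ Finset.range (N+1), μ (D j)ᶜ := measure_biUnion_finset_le _ _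
  have hcompl : ∀ j, μ (D j)ᶜ = 1 - c := by
    intro j
    rw [prob_compl_eq_one_sub (hDm j), hDj j]
  rw [Finset.sum_congr rfl (fun j _ => hcompl j), Finset.sum_const, Finset.card_range,
    nsmul_eq_mul] at hsum
  have hc1 : c ≤ 1 := prob_le_one
  have hcne : c ≠ ⊤ := (lt_of_le_of_lt hc1 ENNReal.one_lt_top).ne
  have hfin : ((N+1 : ℕ) : ℝ≥0∞) * (1 - c) ≠ ⊤ := by
    apply ENNReal.mul_ne_top (by simp)
    exact (lt_of_le_of_lt tsub_le_self ENNReal.one_lt_top).ne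
  have hreal : (1 : ℝ) ≤ ((N:ℝ) + 1) * (1 - c.toReal) := by
    have := ENNReal.toReal_mono hfin hsum
    rw [ENNReal.toReal_mul, ENNReal.toReal_sub_of_le hc1 ENNReal.one_ne_top] at this
    simp only [ENNReal.toReal_one, ENNReal.toReal_natCast] at this
    push_cast at this
    linarith
  have hpos : (0:ℝ) < (N:ℝ) + 1 := by positivity
  rw [le_div_iff₀ hpos]
  nlinarith [hreal]

end


section
open MeasureTheory
open scoped ENNReal NNReal
variable {N : ℕ} {β : ℝ}

lemma countable_simple (hβ : 1 < β) : Set.Countable {x : ℝ | isSimple β x} := by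
  have hb : (0:ℝ) < β := lt_trans one_pos hβ
  have hfiber : ∀ C : Set ℝ, C.Countable → (tauβ β ⁻¹' C).Countable := by
    intro C hC
    have hsub : tauβ β ⁻¹' C ⊆ ⋃ z ∈ C, ⋃ d : ℤ, {((d : ℝ) + z)/β} := by
      intro y hy
      simp only [Set.mem_iUnion, Set.mem_singleton_iff]
      refine ⟨tauβ β y, hy, ⌊β * y⌋, ?_⟩
      rw [tauβ]
      field_simp
      ring
    exact Set.Countable.mono hsub
      (hC.biUnion (fun z _ => Set.countable_iUnion (fun d => Set.countable_singleton _)))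
  have hiter : ∀ n : ℕ, (((tauβ β)^[n]) ⁻¹' {1/β}).Countable := by
    intro n
    induction n with
    | zero => simpa using Set.countable_singleton (1/β)
    | succ n ih =>
      have h1 : ((tauβ β)^[n+1]) ⁻¹' {1/β} = tauβ β ⁻¹' (((tauβ β)^[n]) ⁻¹' {1/β}) := by
        ext x
        simp [Set.mem_preimage, Function.iterate_succ_apply]
      rw [h1]
      exact hfiber _ ih
  have : {x : ℝ | isSimple β x} = ⋃ n : ℕ, ((tauβ β)^[n]) ⁻¹' {1/β} := by
    ext x
    simp [isSimple, Set.mem_iUnion, Set.mem_preimage]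
  rw [this]
  exact Set.countable_iUnion hiter

lemma exists_nonsimple (hβ : 1 < β) : ∃ y : ℝ, y ∈ Set.Ioo (0:ℝ) 1 ∧ ¬ isSimple β y := by
  by_contra h
  push_neg at h
  have hsub : Set.Ioo (0:ℝ) 1 ⊆ {x | isSimple β x} := fun y hy => h y hy
  have hcnt : (Set.Ioo (0:ℝ) 1).Countable := (countable_simple hβ).mono hsub
  have hv := hcnt.measure_zero (volume : Measure ℝ)
  rw [Real.volume_Ioo] at hv
  simp at hv

lemma gdigit_shift (x : ℝ) : shiftSeq (gdigit β x) = gdigit β (tauβ β x) := by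
  funext n
  rw [shiftSeq, gdigit, gdigit, Function.iterate_succ_apply]

lemma gdigit_shift_iter (x : ℝ) (k : ℕ) :
    shiftSeq^[k] (gdigit β x) = gdigit β ((tauβ β)^[k] x) := by
  induction k generalizing x with
  | zero => rfl
  | succ k ih =>
    rw [Function.iterate_succ_apply, Function.iterate_succ_apply, gdigit_shift, ih]

lemma nonsimple_tau {x : ℝ} (h : ¬ isSimple β x) : ¬ isSimple β (tauβ β x) := by
  rintro ⟨n, hn⟩
  exact h ⟨n+1, by rwa [Function.iterate_succ_apply]⟩

lemma nonsimple_tau_iter {x : ℝ} (h : ¬ isSimple β x) (k : ℕ) :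
    ¬ isSimple β ((tauβ β)^[k] x) := by
  induction k with
  | zero => exact h
  | succ k ih => rw [Function.iterate_succ_apply']; exact nonsimple_tau ih

lemma shift_iter_apply (u : ℕ → ℤ) (k n : ℕ) : shiftSeq^[k] u n = u (n + k) := by
  induction k generalizing u with
  | zero => rfl
  | succ k ih =>
    rw [Function.iterate_succ_apply, ih]
    simp only [shiftSeq]
    congr 1

/-- prepending a digit `d ∈ {0,1}` to a point. -/
lemma prepend (hβ : 1 < β) {z : ℝ} (hz0 : 0 < z) (hz1 : z < 1) {d : ℤ} (hd0 : 0 ≤ d) :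
    0 < ((d : ℝ) + z)/β ∧ tauβ β (((d : ℝ) + z)/β) = z ∧
      (∀ n, gdigit β (((d : ℝ) + z)/β) n = if n = 0 then d else gdigit β z (n-1)) ∧
      (¬ isSimple β z → ¬ isSimple β (((d : ℝ) + z)/β)) := by
  have hb : (0:ℝ) < β := lt_trans one_pos hβ
  have hd0' : (0:ℝ) ≤ (d:ℝ) := by exact_mod_cast hd0
  have hpos : 0 < ((d : ℝ) + z)/β := by positivity
  have hmul : β * (((d : ℝ) + z)/β) = (d : ℝ) + z := by field_simp
  have hfl : ⌊β * (((d : ℝ) + z)/β)⌋ = d := by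
    rw [hmul, Int.floor_intCast_add, Int.floor_eq_zero_iff.mpr ⟨le_of_lt hz0, hz1⟩, add_zero]
  have htau : tauβ β (((d : ℝ) + z)/β) = z := by
    rw [tauβ, hfl, hmul]; ring
  refine ⟨hpos, htau, ?_, ?_⟩
  · intro n
    match n with
    | 0 => rw [gdigit, Function.iterate_zero_apply, hfl]; simp
    | (m+1) =>
      rw [gdigit, Function.iterate_succ_apply, htau, if_neg (by omega)]
      rfl
  · intro hns
    rintro ⟨n, hn⟩
    match n with
    | 0 =>
      rw [Function.iterate_zero_apply] at hn
      have h1 : (d : ℝ) + z = 1 := by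
        have hβ0 : β ≠ 0 := ne_of_gt hb
        field_simp at hn
        linarith [hn]
      have : d = 0 := by
        by_contra hd
        have : (1:ℝ) ≤ (d:ℝ) := by exact_mod_cast (by omega : (1:ℤ) ≤ d)
        linarith
      rw [this] at h1
      simp at h1
      linarith
    | (m+1) =>
      rw [Function.iterate_succ_apply, htau] at hn
      exact hns ⟨m, hn⟩

end


section
open MeasureTheory
open scoped ENNReal NNReal
variable {N : ℕ} {β : ℝ}

/-- the pattern sequence `(1^N 0)^∞`. -/
def wseq (N : ℕ) : ℕ → ℤ := fun n => if n % (N+1) < N then 1 else 0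

lemma wseq_period (N : ℕ) (n : ℕ) : wseq N (n + (N+1)) = wseq N n := by
  rw [wseq, wseq, Nat.add_mod_right]

lemma block_prepend (hβ : 1 < β) (heq : β ^ (N + 1) = ∑ i ∈ Finset.range (N + 1), β ^ i)
    {z : ℝ} (hz0 : 0 < z) (hz1 : z < 1) (hns : ¬ isSimple β z) :
    ∃ x : ℝ, 0 < x ∧ x < 1 ∧ ¬ isSimple β x ∧
      ∀ n, gdigit β x n =
        if n < N then 1 else if n = N then 0 else gdigit β z (n - (N+1)) := by
  have hb : (0:ℝ) < β := lt_trans one_pos hβ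
  have key : ∀ k, k ≤ N → ∃ x : ℝ, 0 < x ∧ x < qaux β (k+1) ∧ ¬ isSimple β x ∧
      ∀ n, gdigit β x n =
        if n < k then 1 else if n = k then 0 else gdigit β z (n - (k+1)) := by
    intro k
    induction k with
    | zero =>
      intro _
      obtain ⟨hp, ht, hg, hn⟩ := prepend hβ hz0 hz1 (le_refl (0:ℤ))
      refine ⟨((0:ℤ) + z)/β, hp, ?_, hn hns, ?_⟩
      · rw [qaux_one hβ, Int.cast_zero, zero_add, div_lt_div_iff₀ hb hb]
        nlinarith
      · intro n
        rw [hg n]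
        rcases n with _ | m
        · simp
        · rw [if_neg (Nat.succ_ne_zero m), if_neg (by omega : ¬ (m+1 < 0))]
    | succ k ih =>
      intro hk
      obtain ⟨x, hx0, hxq, hxns, hxd⟩ := ih (by omega)
      have hqle : qaux β (k+1) ≤ 1 := by
        rcases lt_or_eq_of_le (by omega : k+1 ≤ N+1) with h | h
        · exact le_of_lt (qaux_lt_one heq hβ (by omega))
        · rw [h, qaux_top heq hβ]
      have hx1 : x < 1 := lt_of_lt_of_le hxq hqle
      obtain ⟨hp, ht, hg, hn⟩ := prepend hβ hx0 hx1 (by norm_num : (0:ℤ) ≤ 1)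
      refine ⟨((1:ℤ) + x)/β, hp, ?_, hn hxns, ?_⟩
      · have hmul := beta_mul_qaux hβ (k+1)
        rw [Int.cast_one, div_lt_iff₀ hb, mul_comm, hmul]
        linarith
      · intro n
        rw [hg n]
        rcases n with _ | m
        · simp
        · rw [if_neg (Nat.succ_ne_zero m)]
          simp only [Nat.succ_sub_one]
          rw [hxd m]
          by_cases h1 : m < k
          · rw [if_pos h1, if_pos (by omega)]
          · by_cases h2 : m = k
            · rw [if_neg h1, if_pos h2, if_neg (by omega), if_pos (by omega)]
            · rw [if_neg h1, if_neg h2, if_neg (by omega), if_neg (by omega)]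
              congr 1
              omega
  obtain ⟨x, hx0, hxq, hxns, hxd⟩ := key N le_rfl
  rw [qaux_top heq hβ] at hxq
  exact ⟨x, hx0, hxq, hxns, hxd⟩

end


section
open MeasureTheory
open scoped ENNReal NNReal
variable {N : ℕ} {β : ℝ}

lemma exists_xm (hβ : 1 < β) (heq : β ^ (N + 1) = ∑ i ∈ Finset.range (N + 1), β ^ i)
    {y : ℝ} (hy : y ∈ Set.Ioo (0:ℝ) 1) (hns : ¬ isSimple β y) :
    ∀ m : ℕ, ∃ x : ℝ, 0 < x ∧ x < 1 ∧ ¬ isSimple β x ∧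
      ∀ n, gdigit β x n =
        if n < m*(N+1) then wseq N n else gdigit β y (n - m*(N+1)) := by
  intro m
  induction m with
  | zero =>
    exact ⟨y, hy.1, hy.2, hns, fun n => by simp⟩
  | succ m ih =>
    obtain ⟨x, hx0, hx1, hxns, hxd⟩ := ih
    obtain ⟨x', h0, h1, hns', hd'⟩ := block_prepend hβ heq hx0 hx1 hxns
    refine ⟨x', h0, h1, hns', ?_⟩
    intro n
    have hsm : (m+1)*(N+1) = m*(N+1) + (N+1) := by ring
    rw [hd' n]
    by_cases hA : n < N
    · rw [if_pos hA, if_pos (by omega)]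
      rw [wseq, Nat.mod_eq_of_lt (by omega), if_pos hA]
    · by_cases hB : n = N
      · rw [if_neg hA, if_pos hB, if_pos (by omega), wseq, hB]
        rw [Nat.mod_eq_of_lt (by omega), if_neg (by omega)]
      · rw [if_neg hA, if_neg hB, hxd (n - (N+1))]
        by_cases hC : n - (N+1) < m*(N+1)
        · rw [if_pos hC, if_pos (by omega)]
          have := wseq_period N (n - (N+1))
          rw [show n - (N+1) + (N+1) = n by omega] at this
          rw [this]
        · rw [if_neg hC, if_neg (by omega)]
          congr 1
          omega

lemma Pk_mem (hβ : 1 < β) (heq : β ^ (N + 1) = ∑ i ∈ Finset.range (N + 1), β ^ i) (k : ℕ) :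
    (fun n => wseq N (n + k)) ∈ Xbeta β := by
  obtain ⟨y, hy, hns⟩ := exists_nonsimple hβ
  choose x hx0 hx1 hxns hxd using exists_xm hβ heq hy hns
  rw [Xbeta]
  refine mem_closure_of_tendsto (f := fun m : ℕ => shiftSeq^[k] (gdigit β (x m)))
    (b := atTop) ?_ ?_
  · rw [tendsto_pi_nhds]
    intro n
    apply tendsto_nhds_of_eventually_eq
    filter_upwards [eventually_ge_atTop (n+k+1)] with m hm
    have h1 : m ≤ m * (N+1) := Nat.le_mul_of_pos_right m (by omega)
    rw [shift_iter_apply, hxd m (n+k), if_pos (by omega)]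
  · apply Filter.Eventually.of_forall
    intro m
    refine ⟨(tauβ β)^[k] (x m), ?_, nonsimple_tau_iter (hxns m) k,
      gdigit_shift_iter (β := β) (x m) k⟩
    rcases Nat.eq_zero_or_pos k with rfl | hk
    · exact ⟨le_of_lt (hx0 m), le_of_lt (hx1 m)⟩
    · have h := tau_iter_mem (β := β) (x m) k hk
      exact ⟨h.1, le_of_lt h.2⟩

end


section
open MeasureTheory
open scoped ENNReal NNReal
variable {N : ℕ} {β : ℝ}

lemma cbeta_attained (hN : 1 ≤ N) (hβ : 1 < β)
    (heq : β ^ (N + 1) = ∑ i ∈ Finset.range (N + 1), β ^ i) :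
    ∃ μ : Measure (ℕ → ℤ), IsProbabilityMeasure μ ∧ μ (Xbeta β) = 1 ∧
      μ.map shiftSeq = μ ∧ ((N : ℝ) / (N + 1)) = (μ {u | u 0 = 1}).toReal := by
  classical
  set P : ℕ → (ℕ → ℤ) := fun k => (fun n => wseq N (n + k)) with hP
  set μ : Measure (ℕ → ℤ) :=
    ((N:ℝ≥0∞)+1)⁻¹ • ∑ k ∈ Finset.range (N+1), Measure.dirac (P k) with hμ
  have hNtop : ((N:ℝ≥0∞)+1) ≠ ⊤ := by simp
  have hN0 : ((N:ℝ≥0∞)+1) ≠ 0 := by simp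
  have happ : ∀ s : Set (ℕ → ℤ), MeasurableSet s →
      μ s = ((N:ℝ≥0∞)+1)⁻¹ * ∑ k ∈ Finset.range (N+1), s.indicator 1 (P k) := by
    intro s hs
    rw [hμ, Measure.smul_apply, Measure.finset_sum_apply, smul_eq_mul]
    congr 1
    exact Finset.sum_congr rfl fun k _ => Measure.dirac_apply' _ hs
  have hcast : ∑ _k ∈ Finset.range (N+1), (1:ℝ≥0∞) = (N:ℝ≥0∞)+1 := by
    rw [Finset.sum_const, Finset.card_range, nsmul_eq_mul, mul_one]
    push_cast
    ring
  have hprob : IsProbabilityMeasure μ := by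
    constructor
    rw [happ _ MeasurableSet.univ]
    have huniv : ∀ k ∈ Finset.range (N+1),
        (Set.univ : Set (ℕ → ℤ)).indicator (1 : (ℕ → ℤ) → ℝ≥0∞) (P k) = 1 := by
      intro k _
      rw [Set.indicator_of_mem (Set.mem_univ _), Pi.one_apply]
    rw [Finset.sum_congr rfl huniv, hcast]
    exact ENNReal.inv_mul_cancel hN0 hNtop
  have hXb : μ (Xbeta β) = 1 := by
    rw [happ _ Xbeta_isClosed.measurableSet]
    have hXk : ∀ k ∈ Finset.range (N+1),
        (Xbeta β).indicator (1 : (ℕ → ℤ) → ℝ≥0∞) (P k) = 1 := by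
      intro k _
      rw [Set.indicator_of_mem (Pk_mem hβ heq k), Pi.one_apply]
    rw [Finset.sum_congr rfl hXk, hcast]
    exact ENNReal.inv_mul_cancel hN0 hNtop
  have hshift : ∀ k, shiftSeq (P k) = P (k+1) := by
    intro k
    funext n
    show wseq N ((n+1) + k) = wseq N (n + (k+1))
    congr 1
    omega
  have hP0 : P (N+1) = P 0 := by
    funext n
    show wseq N (n + (N+1)) = wseq N (n + 0)
    rw [wseq_period, Nat.add_zero]
  have hinv : μ.map shiftSeq = μ := by
    rw [hμ, Measure.map_smul]
    congr 1
    ext s hs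
    rw [Measure.map_apply measurable_shiftSeq hs, Measure.finset_sum_apply,
      Measure.finset_sum_apply]
    have hterm : ∀ k, Measure.dirac (P k) (shiftSeq ⁻¹' s) = Measure.dirac (P (k+1)) s := by
      intro k
      rw [Measure.dirac_apply' _ (measurable_shiftSeq hs), Measure.dirac_apply' _ hs]
      have hiff : P k ∈ shiftSeq ⁻¹' s ↔ P (k+1) ∈ s := by
        rw [Set.mem_preimage, hshift k]
      by_cases h : P (k+1) ∈ s
      · rw [Set.indicator_of_mem (hiff.mpr h), Set.indicator_of_mem h, Pi.one_apply,
          Pi.one_apply]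
      · rw [Set.indicator_of_notMem (fun hc => h (hiff.mp hc)), Set.indicator_of_notMem h]
    rw [Finset.sum_congr rfl fun k _ => hterm k]
    calc ∑ k ∈ Finset.range (N+1), Measure.dirac (P (k+1)) s
        = ∑ k ∈ Finset.range N, Measure.dirac (P (k+1)) s + Measure.dirac (P (N+1)) s :=
          Finset.sum_range_succ _ N
      _ = ∑ k ∈ Finset.range N, Measure.dirac (P (k+1)) s + Measure.dirac (P 0) s := by
          rw [hP0]
      _ = ∑ k ∈ Finset.range (N+1), Measure.dirac (P k) s := (Finset.sum_range_succ' (fun k => Measure.dirac (P k) s) N).symm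
  refine ⟨μ, hprob, hXb, hinv, ?_⟩
  have hval : μ {u | u 0 = 1} = ((N:ℝ≥0∞)+1)⁻¹ * N := by
    rw [happ _ (measurable_cyl 0)]
    congr 1
    have hind : ∀ k ∈ Finset.range (N+1),
        ({u : ℕ → ℤ | u 0 = 1}).indicator (1 : (ℕ → ℤ) → ℝ≥0∞) (P k)
          = if k < N then 1 else 0 := by
      intro k hk
      rw [Finset.mem_range] at hk
      by_cases h : k < N
      · rw [if_pos h, Set.indicator_of_mem]
        · rfl
        · show wseq N (0 + k) = 1
          rw [wseq, Nat.mod_eq_of_lt (by omega), if_pos (by omega)]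
      · rw [if_neg h, Set.indicator_of_notMem]
        intro hc
        have h1 : wseq N (0 + k) = 1 := hc
        rw [wseq, Nat.mod_eq_of_lt (by omega), if_neg (by omega)] at h1
        exact absurd h1 (by norm_num)
    rw [Finset.sum_congr rfl hind, Finset.sum_range_succ, if_neg (lt_irrefl N), add_zero,
      Finset.sum_congr rfl (fun k hk => if_pos (Finset.mem_range.mp hk)), Finset.sum_const,
      Finset.card_range, nsmul_eq_mul, mul_one]
  rw [hval, ENNReal.toReal_mul, ENNReal.toReal_inv]
  simp only [ENNReal.toReal_natCast, ENNReal.toReal_add, ENNReal.toReal_one]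
  rw [ENNReal.toReal_add (by simp) (by simp), ENNReal.toReal_natCast, ENNReal.toReal_one]
  rw [div_eq_inv_mul]

end

/-- **Multinacci numbers.**  If `β > 1` satisfies `β^{N+1} = β^N + ⋯ + β + 1`, then the
quasi-greedy expansion of `1` is `(1^N 0)^∞` and `c_β = N/(N+1)`. -/
theorem cbeta_multinacci (N : ℕ) (hN : 1 ≤ N) (β : ℝ) (hβ : 1 < β)
    (heq : β ^ (N + 1) = ∑ i ∈ Finset.range (N + 1), β ^ i) :
    (∀ n : ℕ, qone β n = if n % (N + 1) < N then 1 else 0) ∧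
      cbeta β = (N : ℝ) / (N + 1) := by
  constructor
  · intro n
    have h : ∃ m : ℕ, (tauβ β)^[m] (1:ℝ) = 1 / β := one_simple heq hβ
    have hf : Nat.find h = N := by
      rw [Nat.find_eq_iff]
      exact ⟨tau_iter_one_N heq hβ, fun k hk => tau_iter_one_ne heq hβ hk⟩
    simp only [qone, dif_pos h, hf]
    by_cases hmod : n % (N+1) = N
    · rw [if_pos hmod, if_neg (by omega), gdigit_one heq hβ le_rfl]
      norm_num
    · have hlt : n % (N+1) < N := by
        have := Nat.mod_lt n (show 0 < N+1 by omega)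
        omega
      rw [if_neg hmod, if_pos hlt, gdigit_one heq hβ (by omega)]
  · obtain ⟨μ0, h1, h2, h3, h4⟩ := cbeta_attained hN hβ heq
    have hub : ∀ r ∈ {r : ℝ | ∃ μ : MeasureTheory.Measure (ℕ → ℤ),
        MeasureTheory.IsProbabilityMeasure μ ∧ μ (Xbeta β) = 1 ∧
        μ.map shiftSeq = μ ∧ r = (μ {u | u 0 = 1}).toReal},
        r ≤ (N : ℝ) / (N + 1) := by
      rintro r ⟨μ', hp, hX, hi, rfl⟩
      exact cbeta_upper hβ heq hp hX hi
    have hmem : (N : ℝ) / (N + 1) ∈ {r : ℝ | ∃ μ : MeasureTheory.Measure (ℕ → ℤ),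
        MeasureTheory.IsProbabilityMeasure μ ∧ μ (Xbeta β) = 1 ∧
        μ.map shiftSeq = μ ∧ r = (μ {u | u 0 = 1}).toReal} := ⟨μ0, h1, h2, h3, h4⟩
    rw [cbeta]
    exact le_antisymm (csSup_le ⟨_, hmem⟩ hub) (le_csSup ⟨_, hub⟩ hmem)
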